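/- For every integer n > 0, the sum over all weakly decreasing tuples (λ₁, λ₂, ..., λₙ) of nonnegative integers with λ₁ + λ₂ + ... + λₙ = n of the product C(λ₁,λ₂)·C(λ₂,λ₃)···C(λₙ,0) multiplied by the rational number n/λ₁ equals 2^n − 1. (Note λ₁ ≥ 1 for every such tuple.) -/

import Mathlib

open Finset

/-- Weakly decreasing tuples `(λ₁,…,λₙ)` of nonnegative integers with `λ₁+⋯+λₙ = n`. -/
def partitionTuples (n : ℕ) : Finset (Fin n → ℕ) :=
  (Finset.Nat.antidiagonalTuple n n).filter fun t => ∀ i j : Fin n, i ≤ j → t j ≤ t i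

/-- The product `C(λ₁,λ₂)·C(λ₂,λ₃)⋯C(λₙ,0)` with the convention `λ_{n+1} = 0`. -/
def binomProd (n : ℕ) (t : Fin n → ℕ) : ℕ :=
  ∏ i : Fin n, Nat.choose (t i) (if h : (i : ℕ) + 1 < n then t ⟨(i : ℕ) + 1, h⟩ else 0)

/-!
The binomial product vanishes unless the tuple is weakly decreasing, so the sum may run over all
tuples summing to `n`. Conditioning on the first part `λ₁ = j`, the remaining `n - 1` parts sum to
`r = n - j`, and the sum of `C(j, λ₂) C(λ₂, λ₃) ⋯` over them is the multiset coefficient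
`multichoose j r = C(n - 1, j - 1)`: peeling off one part at a time, both sides satisfy the
recursion `multichoose k r = ∑_{a + b = r} C(k, a) multichoose a b` (a multiset is its support
together with a multiset of excess multiplicities on the support). Finally
`(n / j) C(n - 1, j - 1) = C(n, j)`, and the `j = 0` term vanishes because `n / 0 = 0` in `ℚ`.
-/

theorem Finset.Nat.sum_antidiagonalTuple_succ {M : Type*} [AddCommMonoid M] (k n : ℕ)
    (f : (Fin (k + 1) → ℕ) → M) :
    ∑ t ∈ Nat.antidiagonalTuple (k + 1) n, f t =
      ∑ p ∈ antidiagonal n, ∑ s ∈ Nat.antidiagonalTuple k p.2, f (Fin.cons p.1 s) := by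
  change ((List.Nat.antidiagonalTuple (k + 1) n : Multiset _).map f).sum =
    (((List.Nat.antidiagonal n : List (ℕ × ℕ)) : Multiset (ℕ × ℕ)).map fun p =>
      ((List.Nat.antidiagonalTuple k p.2 : Multiset _).map fun s => f (Fin.cons p.1 s)).sum).sum
  simp only [Multiset.map_coe, Multiset.sum_coe, List.Nat.antidiagonalTuple, List.flatMap,
    List.map_flatten, List.sum_flatten, List.map_map, Function.comp_def]

theorem Nat.multichoose_eq_sum_antidiagonal (k r : ℕ) :
    k.multichoose r = ∑ p ∈ antidiagonal r, k.choose p.1 * p.1.multichoose p.2 := by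
  rcases r with _ | r
  · simp
  rw [Nat.multichoose_eq, show k + (r + 1) - 1 = k + r by omega, Nat.add_choose_eq]
  refine sum_congr rfl fun p hp => ?_
  rw [Nat.multichoose_eq, show p.1 + p.2 - 1 = r by rw [HasAntidiagonal.mem_antidiagonal.mp hp]; rfl]

theorem Nat.cast_multichoose_succ_mul_div (a b : ℕ) :
    ((a + 1).multichoose b : ℚ) * ((a + b + 1 : ℕ) / (a + 1 : ℕ)) = (a + b + 1).choose (a + 1) := by
  have absorption := Nat.add_one_mul_choose_eq (a + b) a
  rw [Nat.multichoose_eq, show a + 1 + b - 1 = a + b by omega, ← Nat.choose_symm_add]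
  field_simp
  norm_cast
  rw [mul_comm, absorption, mul_comm]

theorem sum_antidiagonal_multichoose_mul_div (m : ℕ) :
    ∑ p ∈ antidiagonal (m + 1), (p.1.multichoose p.2 : ℚ) * ((m + 1 : ℕ) / p.1) = 2 ^ (m + 1) - 1 := by
  have binomial : ∑ k ∈ range (m + 1), ((m + 1).choose (k + 1) : ℚ) + 1 = 2 ^ (m + 1) := by
    have := Nat.sum_range_choose (m + 1)
    rw [sum_range_succ'] at this
    exact_mod_cast this
  rw [← binomial, add_sub_cancel_right, Nat.sum_antidiagonal_succ, Nat.cast_zero, div_zero,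
    mul_zero, zero_add, Nat.sum_antidiagonal_eq_sum_range_succ_mk]
  refine sum_congr rfl fun k hk => ?_
  obtain ⟨b, rfl⟩ := Nat.exists_eq_add_of_le (Nat.lt_succ_iff.mp (mem_range.mp hk))
  rw [Nat.add_sub_cancel_left, ← Nat.cast_multichoose_succ_mul_div]

def headOrZero : {m : ℕ} → (Fin m → ℕ) → ℕ
  | 0, _ => 0
  | _ + 1, s => s 0

theorem binomProd_cons {m : ℕ} (j : ℕ) (s : Fin m → ℕ) :
    binomProd (m + 1) (Fin.cons j s) = j.choose (headOrZero s) * binomProd m s := by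
  cases m with
  | zero => simp [binomProd, headOrZero]
  | succ m =>
    rw [binomProd, Fin.prod_univ_succ, binomProd]
    congr 1
    exact prod_congr rfl fun i _ => by simp only [Fin.val_succ, add_lt_add_iff_right]; rfl

theorem antitone_of_binomProd_ne_zero {n : ℕ} {t : Fin n → ℕ} (h : binomProd n t ≠ 0) :
    Antitone t := by
  cases n with
  | zero => exact fun i => i.elim0
  | succ m =>
    rw [Fin.antitone_iff_succ_le]
    intro i
    by_contra! hi
    refine h (prod_eq_zero (mem_univ i.castSucc) ?_)
    rw [dif_pos (by simp)]
    exact Nat.choose_eq_zero_of_lt hi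

def chainSum (k m r : ℕ) : ℕ :=
  ∑ s ∈ Nat.antidiagonalTuple m r, k.choose (headOrZero s) * binomProd m s

theorem chainSum_succ (k m r : ℕ) :
    chainSum k (m + 1) r = ∑ p ∈ antidiagonal r, k.choose p.1 * chainSum p.1 m p.2 := by
  rw [chainSum, Nat.sum_antidiagonalTuple_succ]
  refine sum_congr rfl fun p _ => ?_
  rw [chainSum, mul_sum]
  exact sum_congr rfl fun s _ => by rw [binomProd_cons, headOrZero, Fin.cons_zero]

theorem chainSum_eq_multichoose {k m r : ℕ} (h : r ≤ m ∨ k = 0) :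
    chainSum k m r = k.multichoose r := by
  induction m generalizing k r with
  | zero =>
    rcases r with _ | r
    · simp [chainSum, headOrZero, binomProd]
    · obtain rfl : k = 0 := h.resolve_left (by omega)
      simp [chainSum]
  | succ m ih =>
    rw [chainSum_succ, Nat.multichoose_eq_sum_antidiagonal]
    refine sum_congr rfl fun ⟨a, b⟩ hab => ?_
    rw [HasAntidiagonal.mem_antidiagonal] at hab
    rcases Nat.eq_zero_or_pos a with rfl | ha
    · rw [ih (Or.inr rfl)]
    rcases h with h | rfl
    · rw [ih (Or.inl (by omega))]
    · simp [Nat.choose_eq_zero_of_lt ha]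

theorem stmt1 (n : ℕ) (hn : 0 < n) :
    ∑ t ∈ partitionTuples n, (binomProd n t : ℚ) * ((n : ℚ) / (t ⟨0, hn⟩ : ℚ))
      = 2 ^ n - 1 := by
  obtain ⟨m, rfl⟩ := Nat.exists_eq_add_one_of_ne_zero hn.ne'
  have all_tuples : ∑ t ∈ partitionTuples (m + 1),
      (binomProd (m + 1) t : ℚ) * ((m + 1 : ℕ) / (t ⟨0, hn⟩ : ℚ)) =
      ∑ t ∈ Nat.antidiagonalTuple (m + 1) (m + 1),
        (binomProd (m + 1) t : ℚ) * ((m + 1 : ℕ) / (t 0 : ℚ)) :=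
    sum_filter_of_ne fun t _ ht =>
      antitone_of_binomProd_ne_zero (Nat.cast_ne_zero.mp (left_ne_zero_of_mul ht))
  rw [all_tuples, Nat.sum_antidiagonalTuple_succ, ← sum_antidiagonal_multichoose_mul_div]
  refine sum_congr rfl fun ⟨j, r⟩ hjr => ?_
  rw [HasAntidiagonal.mem_antidiagonal] at hjr
  rw [← chainSum_eq_multichoose (show r ≤ m ∨ j = 0 by omega), chainSum, Nat.cast_sum, sum_mul]
  refine sum_congr rfl fun s _ => ?_
  rw [binomProd_cons, Fin.cons_zero]
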